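/- Let W be an N×N real matrix with nonnegative entries and α > 0 with α·ρ(W) < 1, and let z ∈ ℝ^N have nonnegative entries with at least one strictly positive entry. Let Q be an N×N real symmetric matrix with nonnegative entries, Q·1 = 1, and such that there exists λ ∈ [0,1) with ‖Qv‖ ≤ λ‖v‖ for all v with 1ᵀv = 0. Define c(t+1) = α Wᵀ c(t) + z and c̄(t+1) = Q c̄(t) + (c(t+1) − c(t)) with c(0) = c̄(0) = z. Then c(t) → ρ_α = (I_N − α Wᵀ)⁻¹ z and c̄(t) → ρ̄_α · 1, where ρ̄_α = (1/N) Σ_{j=1}^N (ρ_α)_j is the average of the entries of ρ_α. -/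

import Mathlib

open Filter

/-- The Euclidean norm of a vector in `ℝ^N`. -/
noncomputable def eNorm {N : ℕ} (v : Fin N → ℝ) : ℝ :=
  Real.sqrt (∑ i, v i ^ 2)

/-- The spectral radius of a real square matrix: the supremum of the absolute
values of the (complex) eigenvalues of its complexification. -/
noncomputable def specRad {N : ℕ} (W : Matrix (Fin N) (Fin N) ℝ) : ℝ :=
  sSup {r : ℝ | ∃ μ ∈ spectrum ℂ (W.map (Complex.ofReal · )), r = ‖μ‖}

section Aux

lemma eNorm_eq {N : ℕ} (v : Fin N → ℝ) :
    eNorm v = ‖(WithLp.equiv 2 (Fin N → ℝ)).symm v‖ := by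
  rw [EuclideanSpace.norm_eq]
  simp [eNorm, sq_abs]

lemma eNorm_nonneg' {N : ℕ} (v : Fin N → ℝ) : 0 ≤ eNorm v := Real.sqrt_nonneg _

lemma eNorm_add_le {N : ℕ} (v w : Fin N → ℝ) : eNorm (v + w) ≤ eNorm v + eNorm w := by
  simp only [eNorm_eq]
  rw [show (WithLp.equiv 2 (Fin N → ℝ)).symm (v + w)
      = (WithLp.equiv 2 (Fin N → ℝ)).symm v + (WithLp.equiv 2 (Fin N → ℝ)).symm w from rfl]
  exact norm_add_le _ _

lemma abs_le_eNorm {N : ℕ} (v : Fin N → ℝ) (i : Fin N) : |v i| ≤ eNorm v := by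
  unfold eNorm
  rw [show |v i| = Real.sqrt (v i ^ 2) by rw [Real.sqrt_sq_eq_abs]]
  exact Real.sqrt_le_sqrt (Finset.single_le_sum (f := fun j => v j ^ 2)
    (fun j _ => sq_nonneg _) (Finset.mem_univ i))

lemma continuous_eNorm {N : ℕ} : Continuous (@eNorm N) := by
  unfold eNorm; fun_prop

lemma tendsto_zero_of_contract (lam : ℝ) (hl0 : 0 ≤ lam) (hl1 : lam < 1) (u b : ℕ → ℝ)
    (hu : ∀ t, 0 ≤ u t) (hrec : ∀ t, u (t + 1) ≤ lam * u t + b t)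
    (hb : Tendsto b atTop (nhds 0)) : Tendsto u atTop (nhds 0) := by
  rw [Metric.tendsto_atTop]
  intro ε hε
  have hA : 0 < ε * (1 - lam) / 2 := by nlinarith
  obtain ⟨T₀, hT₀⟩ := (Metric.tendsto_atTop.mp hb) (ε * (1 - lam) / 2) hA
  have claim : ∀ s, u (T₀ + s) ≤ lam ^ s * u T₀ + ε / 2 := by
    intro s
    induction s with
    | zero => simpa using by nlinarith [hu T₀]
    | succ s ih =>
      have hb' : b (T₀ + s) < ε * (1 - lam) / 2 := by
        have := hT₀ (T₀ + s) (by omega)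
        rw [Real.dist_eq, sub_zero] at this
        exact (abs_lt.mp this).2
      have h2 : lam * u (T₀ + s) ≤ lam * (lam ^ s * u T₀ + ε / 2) :=
        mul_le_mul_of_nonneg_left ih hl0
      rw [show T₀ + (s + 1) = (T₀ + s) + 1 by omega]
      calc u ((T₀ + s) + 1) ≤ lam * u (T₀ + s) + b (T₀ + s) := hrec _
        _ ≤ lam * (lam ^ s * u T₀ + ε / 2) + ε * (1 - lam) / 2 := by nlinarith
        _ ≤ lam ^ (s + 1) * u T₀ + ε / 2 := by ring_nf; nlinarith [pow_nonneg hl0 s, hu T₀]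
  have hpow : Tendsto (fun s => lam ^ s * u T₀) atTop (nhds 0) := by
    simpa using (tendsto_pow_atTop_nhds_zero_of_lt_one hl0 hl1).mul_const (u T₀)
  obtain ⟨s₀, hs₀⟩ := (Metric.tendsto_atTop.mp hpow) (ε / 2) (by linarith)
  refine ⟨T₀ + s₀, fun t ht => ?_⟩
  have h1 : u t ≤ lam ^ (t - T₀) * u T₀ + ε / 2 := by
    have := claim (t - T₀)
    rwa [show T₀ + (t - T₀) = t by omega] at this
  have h2 : lam ^ (t - T₀) * u T₀ < ε / 2 := by
    have := hs₀ (t - T₀) (by omega)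
    rw [Real.dist_eq, sub_zero] at this
    exact (abs_lt.mp this).2
  rw [Real.dist_eq, sub_zero, abs_of_nonneg (hu t)]
  linarith

end Aux

section SpectralAux

open Matrix
open scoped Matrix.Norms.L2Operator

lemma rad_lt {N : ℕ} (hN : 0 < N) (W : Matrix (Fin N) (Fin N) ℝ)
    (α : ℝ) (hα : 0 < α) (hspec : α * specRad W < 1) :
    ∀ μ ∈ spectrum ℂ ((α • W.transpose).map (Complex.ofReal ·)), ‖μ‖ < 1 := by
  haveI : Nonempty (Fin N) := ⟨⟨0, hN⟩⟩
  intro μ hμ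
  set Wc : Matrix (Fin N) (Fin N) ℂ := W.map (Complex.ofReal ·) with hWc
  have hMc : (α • W.transpose).map (Complex.ofReal ·) = (α : ℂ) • Wc.transpose := by
    ext i j
    simp [Matrix.map_apply, Matrix.smul_apply, Matrix.transpose_apply, Complex.ofReal_mul,
      smul_eq_mul, Wc]
  rw [hMc] at hμ
  have hαne : (α : ℂ) ≠ 0 := by exact_mod_cast hα.ne'
  rw [show (α : ℂ) • Wc.transpose = (Units.mk0 (α : ℂ) hαne) • Wc.transpose from rfl,
    spectrum.unit_smul_eq_smul] at hμ
  obtain ⟨ν, hν, hμν⟩ := hμ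
  have hμν' : μ = (α : ℂ) * ν := by simpa [Units.smul_def, mul_comm] using hμν.symm
  have hνW : ν ∈ spectrum ℂ Wc := by
    have htr : spectrum ℂ Wc.transpose = spectrum ℂ Wc := by
      ext x
      simp only [spectrum.mem_iff, Matrix.isUnit_iff_isUnit_det, Algebra.algebraMap_eq_smul_one]
      rw [show (x • (1 : Matrix (Fin N) (Fin N) ℂ) - Wc.transpose) = (x • 1 - Wc).transpose by
        rw [Matrix.transpose_sub, Matrix.transpose_smul, Matrix.transpose_one],
        Matrix.det_transpose]
    rwa [htr] at hν
  have hbdd : BddAbove {r : ℝ | ∃ μ ∈ spectrum ℂ Wc, r = ‖μ‖} := by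
    refine ⟨‖Wc‖ * ‖(1 : Matrix (Fin N) (Fin N) ℂ)‖, ?_⟩
    rintro r ⟨μ', hμ', rfl⟩
    have := spectrum.norm_le_norm_mul_of_mem hμ'
    exact this
  have hle : ‖ν‖ ≤ specRad W := by
    apply le_csSup hbdd
    exact ⟨ν, hνW, rfl⟩
  have : ‖μ‖ = α * ‖ν‖ := by
    rw [hμν', norm_mul, Complex.norm_real, Real.norm_eq_abs, abs_of_pos hα]
  rw [this]
  calc α * ‖ν‖ ≤ α * specRad W := mul_le_mul_of_nonneg_left hle hα.le
    _ < 1 := hspec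

lemma key_decay {N : ℕ} (hN : 0 < N) (M : Matrix (Fin N) (Fin N) ℝ)
    (hrad : ∀ μ ∈ spectrum ℂ (M.map (Complex.ofReal ·)), ‖μ‖ < 1) :
    IsUnit (1 - M).det ∧
      ∀ v : Fin N → ℝ, ∀ i, Tendsto (fun t => ((M ^ t) *ᵥ v) i) atTop (nhds 0) := by
  haveI : Nonempty (Fin N) := ⟨⟨0, hN⟩⟩
  set Mc : Matrix (Fin N) (Fin N) ℂ := M.map (Complex.ofReal ·) with hMcdef
  -- spectral radius < 1
  have hρ : spectralRadius ℂ Mc < 1 := by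
    have := spectrum.spectralRadius_lt_of_forall_lt_of_nonempty (spectrum.nonempty Mc)
      (r := 1) (fun k hk => by
        have h := hrad k hk
        exact_mod_cast h)
    simpa using this
  -- norm of powers tends to 0
  have hnorm0 : Tendsto (fun n => ‖Mc ^ n‖) atTop (nhds 0) := by
    obtain ⟨δ, hδ1, hδ2⟩ := exists_between hρ
    have hδtop : δ ≠ ⊤ := (hδ2.trans (by simp)).ne
    set εr := δ.toReal with hεr
    have hεr1 : εr < 1 := by
      have := (ENNReal.toReal_lt_toReal hδtop (by simp)).mpr hδ2
      simpa using this
    have hεr0 : 0 ≤ εr := ENNReal.toReal_nonneg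
    have hEv : ∀ᶠ n : ℕ in atTop, ENNReal.ofReal (‖Mc ^ n‖ ^ (1 / (n : ℝ))) < δ :=
      (spectrum.pow_norm_pow_one_div_tendsto_nhds_spectralRadius Mc).eventually_lt_const hδ1
    have hEv2 : ∀ᶠ n : ℕ in atTop, ‖Mc ^ n‖ ≤ εr ^ n := by
      filter_upwards [hEv, eventually_ge_atTop 1] with n h1 h2
      have hlt : ‖Mc ^ n‖ ^ (1 / (n : ℝ)) < εr := by
        rw [ENNReal.ofReal_lt_iff_lt_toReal (by positivity) hδtop] at h1
        exact h1
      have hnn : (n : ℝ) ≠ 0 := by positivity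
      have heq : ((‖Mc ^ n‖ ^ (1 / (n : ℝ))) : ℝ) ^ (n : ℕ) = ‖Mc ^ n‖ := by
        rw [← Real.rpow_natCast (_ ^ _) n, ← Real.rpow_mul (norm_nonneg _), one_div,
          inv_mul_cancel₀ hnn, Real.rpow_one]
      calc ‖Mc ^ n‖ = ((‖Mc ^ n‖ ^ (1 / (n : ℝ))) : ℝ) ^ (n : ℕ) := heq.symm
        _ ≤ εr ^ n := pow_le_pow_left₀ (by positivity) hlt.le n
    exact squeeze_zero' (Eventually.of_forall fun n => norm_nonneg _) hEv2
      (tendsto_pow_atTop_nhds_zero_of_lt_one hεr0 hεr1)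
  constructor
  · -- 1 - M invertible
    have h1 : (1 : ℂ) ∉ spectrum ℂ Mc := by
      intro h
      have := hrad 1 h
      simp at this
    rw [spectrum.notMem_iff] at h1
    rw [_root_.map_one] at h1
    have h2 : IsUnit (1 - Mc).det := (Matrix.isUnit_iff_isUnit_det _).mp h1
    have h3 : (1 : Matrix (Fin N) (Fin N) ℂ) - Mc = Complex.ofRealHom.mapMatrix (1 - M) := by
      rw [_root_.map_sub, _root_.map_one]
      rfl
    rw [h3, ← RingHom.map_det] at h2
    simp only [isUnit_iff_ne_zero] at h2 ⊢
    intro hdet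
    apply h2
    rw [show (Complex.ofRealHom : ℝ →+* ℂ) (1 - M).det = ((1 - M).det : ℂ) from rfl, hdet]
    simp
  · -- power decay of mulVec
    intro v i
    set vC : Fin N → ℂ := fun j => (v j : ℂ) with hvC
    set K := Real.sqrt (∑ j, ‖vC j‖ ^ 2) with hK
    have hbd : ∀ t, |((M ^ t) *ᵥ v) i| ≤ ‖Mc ^ t‖ * K := by
      intro t
      have hcoe : Complex.ofReal (((M ^ t) *ᵥ v) i) = ((Mc ^ t) *ᵥ vC) i := by
        have h := RingHom.map_mulVec Complex.ofRealHom (M ^ t) v i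
        rw [show (Complex.ofRealHom : ℝ →+* ℂ) ((M ^ t *ᵥ v) i)
            = Complex.ofReal ((M ^ t *ᵥ v) i) from rfl] at h
        rw [h]
        congr 1
        rw [show (M ^ t).map Complex.ofRealHom = Complex.ofRealHom.mapMatrix (M ^ t) from rfl,
          map_pow]
        rfl
      have habs : |((M ^ t) *ᵥ v) i| = ‖((Mc ^ t) *ᵥ vC) i‖ := by
        rw [← hcoe, Complex.norm_real, Real.norm_eq_abs]
      rw [habs]
      -- operator norm bound
      have key := Matrix.l2_opNorm_mulVec (Mc ^ t) ((WithLp.equiv 2 (Fin N → ℂ)).symm vC)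
      have h1 : ‖((WithLp.equiv 2 (Fin N → ℂ)).symm vC)‖ = K := by
        rw [EuclideanSpace.norm_eq]
        simp [hK]
      have h2 : ‖((Mc ^ t) *ᵥ vC) i‖ ≤
          ‖(EuclideanSpace.equiv (Fin N) ℂ).symm
            ((Mc ^ t) *ᵥ ((WithLp.equiv 2 (Fin N → ℂ)).symm vC))‖ := by
        rw [EuclideanSpace.norm_eq]
        rw [show ‖((Mc ^ t) *ᵥ vC) i‖ = Real.sqrt (‖((Mc ^ t) *ᵥ vC) i‖ ^ 2) by
          rw [Real.sqrt_sq (norm_nonneg _)]]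
        apply Real.sqrt_le_sqrt
        apply Finset.single_le_sum (f := fun j => ‖((EuclideanSpace.equiv (Fin N) ℂ).symm
          ((Mc ^ t) *ᵥ ((WithLp.equiv 2 (Fin N → ℂ)).symm vC))) j‖ ^ 2)
          (fun j _ => by positivity) (Finset.mem_univ i)
      calc ‖((Mc ^ t) *ᵥ vC) i‖ ≤ _ := h2
        _ ≤ ‖Mc ^ t‖ * ‖((WithLp.equiv 2 (Fin N → ℂ)).symm vC)‖ := key
        _ = ‖Mc ^ t‖ * K := by rw [h1]
    exact squeeze_zero_norm hbd (by simpa using hnorm0.mul_const K)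

end SpectralAux

/-- Convergence of the centrality estimate and of the average-centrality
estimate: `c(t) → ρ_α = (I − α Wᵀ)⁻¹ z` and `c̄(t) → ρ̄_α·1`, where `ρ̄_α` is
the average of the entries of `ρ_α`. -/
theorem average_centrality_estimation_converges
    {N : ℕ} (W : Matrix (Fin N) (Fin N) ℝ)
    (hWnn : ∀ i j, 0 ≤ W i j)
    (α : ℝ) (hα : 0 < α) (hspec : α * specRad W < 1)
    (z : Fin N → ℝ) (hznn : ∀ i, 0 ≤ z i) (hzpos : ∃ i, 0 < z i)
    (Q : Matrix (Fin N) (Fin N) ℝ)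
    (hQnn : ∀ i j, 0 ≤ Q i j)
    (hQsymm : Q.transpose = Q)
    (hQone : Q.mulVec (fun _ => (1 : ℝ)) = fun _ => (1 : ℝ))
    (lam : ℝ) (hlam0 : 0 ≤ lam) (hlam1 : lam < 1)
    (hcontract : ∀ v : Fin N → ℝ, (∑ i, v i) = 0 →
      eNorm (Q.mulVec v) ≤ lam * eNorm v)
    (c cbar : ℕ → Fin N → ℝ)
    (hc0 : c 0 = z) (hcbar0 : cbar 0 = z)
    (hc : ∀ t, c (t + 1) = α • (W.transpose.mulVec (c t)) + z)
    (hcbar : ∀ t, cbar (t + 1) = Q.mulVec (cbar t) + (c (t + 1) - c t)) :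
    Tendsto c atTop (nhds ((1 - α • W.transpose)⁻¹.mulVec z)) ∧
    Tendsto cbar atTop
      (nhds (fun _ => (∑ j, (1 - α • W.transpose)⁻¹.mulVec z j) / (N : ℝ))) := by
  rcases Nat.eq_zero_or_pos N with hN | hN
  · subst hN
    have htriv : ∀ (f : ℕ → Fin 0 → ℝ) (x : Fin 0 → ℝ), Tendsto f atTop (nhds x) := by
      intro f x
      have : f = fun _ => x := funext fun t => funext fun i => i.elim0
      rw [this]; exact tendsto_const_nhds
    exact ⟨htriv c _, htriv cbar _⟩
  -- main case
  set M : Matrix (Fin N) (Fin N) ℝ := α • W.transpose with hM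
  obtain ⟨hdet, htend0⟩ := key_decay hN M (rad_lt hN W α hα hspec)
  set ρv : Fin N → ℝ := (1 - M)⁻¹.mulVec z with hρv
  have hNne : (N : ℝ) ≠ 0 := Nat.cast_ne_zero.mpr hN.ne'
  -- fixed point equation
  have hfix : ρv = M.mulVec ρv + z := by
    have h1 : (1 - M).mulVec ρv = z := by
      rw [hρv, Matrix.mulVec_mulVec, Matrix.mul_nonsing_inv _ hdet, Matrix.one_mulVec]
    rw [Matrix.sub_mulVec, Matrix.one_mulVec] at h1
    exact (sub_eq_iff_eq_add'.mp h1)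
  -- difference formula
  have hdiff : ∀ t, c t - ρv = (M ^ t).mulVec (z - ρv) := by
    intro t
    induction t with
    | zero => simp [hc0, Matrix.one_mulVec]
    | succ t ih =>
      rw [hc t]
      have : α • (W.transpose.mulVec (c t)) = M.mulVec (c t) := by
        rw [hM, Matrix.smul_mulVec]
      rw [this]
      have : M.mulVec (c t) + z - ρv = M.mulVec (c t - ρv) := by
        conv_lhs => rw [hfix]
        rw [Matrix.mulVec_sub]
        abel
      rw [this, ih, Matrix.mulVec_mulVec, ← pow_succ']
  -- part 1
  have part1comp : ∀ i, Tendsto (fun t => c t i) atTop (nhds (ρv i)) := by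
    intro i
    have h := (htend0 (z - ρv) i).add_const (ρv i)
    rw [zero_add] at h
    refine h.congr fun t => ?_
    have := congrFun (hdiff t) i
    simp only [Pi.sub_apply] at this
    linarith
  have part1 : Tendsto c atTop (nhds ρv) := tendsto_pi_nhds.mpr part1comp
  refine ⟨part1, ?_⟩
  -- part 2
  set S : ℕ → ℝ := fun t => ∑ i, c t i with hSdef
  have hS : Tendsto S atTop (nhds (∑ i, ρv i)) :=
    tendsto_finset_sum _ fun i _ => part1comp i
  have rowsum : ∀ i, ∑ j, Q i j = 1 := by
    intro i
    have h := congrFun hQone i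
    simpa [Matrix.mulVec, dotProduct] using h
  have colsum : ∀ j, ∑ i, Q i j = 1 := by
    intro j
    calc ∑ i, Q i j = ∑ i, Q j i := by
          refine Finset.sum_congr rfl fun i _ => ?_
          conv_lhs => rw [← hQsymm]
          rfl
      _ = 1 := rowsum j
  have sumQ : ∀ v : Fin N → ℝ, ∑ i, (Q.mulVec v) i = ∑ i, v i := by
    intro v
    simp only [Matrix.mulVec, dotProduct]
    rw [Finset.sum_comm]
    refine Finset.sum_congr rfl fun j _ => ?_
    rw [← Finset.sum_mul, colsum j, one_mul]
  have hsum : ∀ t, ∑ i, cbar t i = S t := by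
    intro t
    induction t with
    | zero => rw [hcbar0, hSdef]; simp [hc0]
    | succ t ih =>
      rw [hcbar t]
      simp only [Pi.add_apply, Pi.sub_apply]
      rw [Finset.sum_add_distrib, sumQ, ih, Finset.sum_sub_distrib]
      simp only [hSdef]
      ring
  set e : ℕ → Fin N → ℝ := fun t i => cbar t i - S t / N with hedef
  have hesum : ∀ t, ∑ i, e t i = 0 := by
    intro t
    simp only [hedef]
    rw [Finset.sum_sub_distrib, hsum t, Finset.sum_const, Finset.card_univ, Fintype.card_fin,
      nsmul_eq_mul]
    field_simp
    ring
  set d : ℕ → Fin N → ℝ := fun t i => (c (t + 1) i - c t i) - (S (t + 1) - S t) / N with hddef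
  have herec : ∀ t, e (t + 1) = Q.mulVec (e t) + d t := by
    intro t
    funext i
    have hQe : (Q.mulVec (e t)) i = (Q.mulVec (cbar t)) i - S t / N := by
      simp only [Matrix.mulVec, dotProduct, hedef]
      rw [show ∀ f g : Fin N → ℝ, (∑ j, Q i j * (f j - g j)) = (∑ j, Q i j * f j) - ∑ j, Q i j * g j
        from fun f g => by rw [← Finset.sum_sub_distrib]; exact Finset.sum_congr rfl fun j _ => by ring]
      congr 1
      rw [show (∑ j, Q i j * (S t / N)) = (∑ j, Q i j) * (S t / N) by rw [Finset.sum_mul],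
        rowsum i, one_mul]
    simp only [Pi.add_apply, hedef, hddef]
    rw [hQe]
    have := congrFun (hcbar t) i
    simp only [Pi.add_apply, Pi.sub_apply] at this
    rw [this]
    ring
  have hbound : ∀ t, eNorm (e (t + 1)) ≤ lam * eNorm (e t) + eNorm (d t) := by
    intro t
    rw [herec t]
    calc eNorm (Q.mulVec (e t) + d t) ≤ eNorm (Q.mulVec (e t)) + eNorm (d t) := eNorm_add_le _ _
      _ ≤ lam * eNorm (e t) + eNorm (d t) :=
        add_le_add_left (hcontract (e t) (hesum t)) _
  have hd0 : Tendsto (fun t => eNorm (d t)) atTop (nhds 0) := by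
    have hdt : Tendsto d atTop (nhds 0) := by
      rw [tendsto_pi_nhds]
      intro i
      have h1 : Tendsto (fun t => c (t + 1) i) atTop (nhds (ρv i)) :=
        (part1comp i).comp (tendsto_add_atTop_nat 1)
      have h2 : Tendsto (fun t => S (t + 1)) atTop (nhds (∑ j, ρv j)) :=
        hS.comp (tendsto_add_atTop_nat 1)
      have := ((h1.sub (part1comp i)).sub ((h2.sub hS).div_const (N : ℝ)))
      simpa using this
    have hcont := (continuous_eNorm (N := N)).tendsto (0 : Fin N → ℝ)
    have := hcont.comp hdt
    simpa [eNorm, Function.comp_def] using this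
  have hE : Tendsto (fun t => eNorm (e t)) atTop (nhds 0) :=
    tendsto_zero_of_contract lam hlam0 hlam1 _ _ (fun t => eNorm_nonneg' _)
      hbound hd0
  rw [tendsto_pi_nhds]
  intro i
  have he0 : Tendsto (fun t => e t i) atTop (nhds 0) :=
    squeeze_zero_norm (fun t => abs_le_eNorm (e t) i) hE
  have hfin := he0.add (hS.div_const (N : ℝ))
  rw [zero_add] at hfin
  refine hfin.congr fun t => ?_
  simp only [hedef]
  ring
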